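/- Let X be a real-valued integrable random variable and F a sub-σ-algebra. Then for ε > 0, the event {|E(X|F)| > 2ε} is contained (up to a null set) in the event {|E(X·1_{|X|>ε} | F)| > ε}, and consequently ε^p · 1_{|E(X|F)| > 2ε} ≤ E(|X|^p · 1_{|X| > ε} | F) almost surely for any p ≥ 1. -/

import Mathlib

open MeasureTheory ProbabilityTheory Filter

/-! Split `X = X·1_{|X|>ε} + X·1_{|X|≤ε}`. The second summand is bounded by `ε`, hence so is its
conditional expectation, which gives `|E(X|F)| ≤ |E(X·1_{|X|>ε}|F)| + ε`. For the moment bound,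
`ε^(p-1)·|X| ≤ |X|^p` on `{|X| > ε}`, so on `{|E(X|F)| > 2ε}` we get
`ε^p < ε^(p-1)·|E(X·1_{|X|>ε}|F)| ≤ E(ε^(p-1)·|X|·1_{|X|>ε}|F) ≤ E(|X|^p·1_{|X|>ε}|F)`. -/

lemma Real.rpow_sub_one_mul_le_rpow {ε x p : ℝ} (hε : 0 ≤ ε) (hεx : ε ≤ x) (hp : 1 ≤ p) :
    ε ^ (p - 1) * x ≤ x ^ p := by
  have hx : 0 ≤ x := hε.trans hεx
  calc ε ^ (p - 1) * x ≤ x ^ (p - 1) * x := by gcongr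
    _ = x ^ p := by rw [← Real.rpow_add_one' hx (by linarith), sub_add_cancel]

namespace MeasureTheory

variable {Ω : Type*} {m m0 : MeasurableSpace Ω} {μ : Measure Ω} {X : Ω → ℝ} {ε : ℝ}

lemma abs_condExp_le_abs_condExp_indicator_add (hX : Integrable X μ) (hε : 0 ≤ ε) :
    ∀ᵐ ω ∂μ, |μ[X|m] ω| ≤ |μ[{ω' | ε < |X ω'|}.indicator X|m] ω| + ε := by
  set A := {ω' | ε < |X ω'|}
  have hA : NullMeasurableSet A μ := nullMeasurableSet_lt aemeasurable_const hX.aemeasurable.abs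
  have hsplit : μ[X|m] =ᵐ[μ] μ[A.indicator X|m] + μ[Aᶜ.indicator X|m] := by
    conv_lhs => rw [← Set.indicator_self_add_compl A X]
    exact condExp_add (hX.indicator₀ hA) (hX.indicator₀ hA.compl) m
  have hsmall : ∀ ω, |Aᶜ.indicator X ω| ≤ ε := by
    intro ω
    by_cases hω : ω ∈ A
    · simp [hω, hε]
    · simpa [hω] using not_lt.mp hω
  filter_upwards [hsplit, ae_bdd_abs_condExp_of_ae_bdd_abs (m := m) (.of_forall hsmall)]
    with ω hω hbdd
  rw [hω, Pi.add_apply]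
  exact (abs_add_le _ _).trans (by gcongr)

lemma rpow_sub_one_mul_abs_condExp_indicator_le (hX : Integrable X μ) {p : ℝ}
    (hXp : Integrable (fun ω => |X ω| ^ p) μ) (hε : 0 ≤ ε) (hp : 1 ≤ p) :
    ∀ᵐ ω ∂μ, ε ^ (p - 1) * |μ[{ω' | ε < |X ω'|}.indicator X|m] ω|
      ≤ μ[{ω' | ε < |X ω'|}.indicator (fun ω' => |X ω'| ^ p)|m] ω := by
  set A := {ω' | ε < |X ω'|}
  have hA : NullMeasurableSet A μ := nullMeasurableSet_lt aemeasurable_const hX.aemeasurable.abs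
  have hpointwise :
      ∀ ω, (ε ^ (p - 1) • |A.indicator X|) ω ≤ A.indicator (fun ω => |X ω| ^ p) ω := by
    intro ω
    by_cases hω : ω ∈ A
    · simpa [hω] using Real.rpow_sub_one_mul_le_rpow hε (le_of_lt hω) hp
    · simp [hω]
  have hmono := condExp_mono (m := m) ((hX.indicator₀ hA).abs.smul (ε ^ (p - 1)))
    (hXp.indicator₀ hA) (.of_forall hpointwise)
  filter_upwards [abs_condExp_ae_le_condExp_abs (m := m) (A.indicator X),
    condExp_smul (m := m) (μ := μ) (ε ^ (p - 1)) |A.indicator X|, hmono] with ω habs hsmul hmono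
  calc ε ^ (p - 1) * |μ[A.indicator X|m] ω|
      ≤ ε ^ (p - 1) * μ[(|A.indicator X|)|m] ω := by gcongr; exact habs
    _ = μ[ε ^ (p - 1) • |A.indicator X| | m] ω := by simp [hsmul]
    _ ≤ _ := hmono

end MeasureTheory

theorem stmt4_general {Ω : Type*} {m0 : MeasurableSpace Ω} (μ : Measure Ω)
    (m : MeasurableSpace Ω) (X : Ω → ℝ) (hX : Integrable X μ)
    (p : ℝ) (hp : 1 ≤ p) (hXp : Integrable (fun ω => |X ω| ^ p) μ)
    (ε : ℝ) (hε : 0 < ε) :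
    (∀ᵐ ω ∂μ, 2 * ε < |(μ[X|m]) ω| →
        ε < |(μ[Set.indicator {ω' | ε < |X ω'|} X|m]) ω|)
    ∧ ∀ᵐ ω ∂μ,
        ε ^ p * Set.indicator {ω' | 2 * ε < |(μ[X|m]) ω'|} (fun _ => (1 : ℝ)) ω
          ≤ (μ[Set.indicator {ω' | ε < |X ω'|} (fun ω' => |X ω'| ^ p)|m]) ω := by
  have hevent : ∀ᵐ ω ∂μ, 2 * ε < |(μ[X|m]) ω| →
      ε < |(μ[Set.indicator {ω' | ε < |X ω'|} X|m]) ω| := by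
    filter_upwards [abs_condExp_le_abs_condExp_indicator_add (m := m) hX hε.le] with ω hω h2ε
    linarith
  refine ⟨hevent, ?_⟩
  filter_upwards [hevent, rpow_sub_one_mul_abs_condExp_indicator_le (m := m) hX hXp hε.le hp,
    condExp_nonneg (m := m) (f := {ω' | ε < |X ω'|}.indicator fun ω' => |X ω'| ^ p)
      (.of_forall fun ω => Set.indicator_nonneg (fun ω _ => by positivity) ω)]
    with ω hlarge hmoment hnonneg
  by_cases hω : 2 * ε < |(μ[X|m]) ω|
  · rw [Set.indicator_of_mem (by exact hω), mul_one]
    calc ε ^ p = ε ^ (p - 1) * ε := by rw [← Real.rpow_add_one hε.ne', sub_add_cancel]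
      _ ≤ ε ^ (p - 1) * |(μ[Set.indicator {ω' | ε < |X ω'|} X|m]) ω| := by
          gcongr; exact (hlarge hω).le
      _ ≤ _ := hmoment
  · simpa [hω] using hnonneg

/-- The event `{|E(X|F)| > 2ε}` is a.s. contained in `{|E(X·1_{|X|>ε}|F)| > ε}`, and
consequently `ε^p · 1_{|E(X|F)| > 2ε} ≤ E(|X|^p · 1_{|X| > ε} | F)` a.s. for `p ≥ 1`. -/
theorem stmt4 {Ω : Type*} {m0 : MeasurableSpace Ω} (μ : Measure Ω) [IsProbabilityMeasure μ]
    (m : MeasurableSpace Ω) (hm : m ≤ m0) (X : Ω → ℝ) (hX : Integrable X μ)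
    (p : ℝ) (hp : 1 ≤ p) (hXp : Integrable (fun ω => |X ω| ^ p) μ)
    (ε : ℝ) (hε : 0 < ε) :
    (∀ᵐ ω ∂μ, 2 * ε < |(μ[X|m]) ω| →
        ε < |(μ[Set.indicator {ω' | ε < |X ω'|} X|m]) ω|)
    ∧ ∀ᵐ ω ∂μ,
        ε ^ p * Set.indicator {ω' | 2 * ε < |(μ[X|m]) ω'|} (fun _ => (1 : ℝ)) ω
          ≤ (μ[Set.indicator {ω' | ε < |X ω'|} (fun ω' => |X ω'| ^ p)|m]) ω :=
  stmt4_general (m0 := m0) μ m X hX p hp hXp ε hε
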